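/- arXiv:0712.3136 — 3 statements merged into one kernel-verified Lean document; each statement's English description precedes it below -/
import Mathlib

section
/- For r ∈ (0,1) and all real s₁, s₂, one has (s₁ - s₂)(s₁^{⟨r⟩} - s₂^{⟨r⟩}) ≥ r·|s₁ - s₂|²·(|s₁| ∨ |s₂|)^{r-1}, where s^{⟨r⟩} := |s|^{r-1}·s denotes the signed r-th power (and the right-hand side is interpreted as 0 when s₁ = s₂ = 0). -/
/-!
Both sides are invariant under swapping `s₁, s₂` and under `(s₁, s₂) ↦ (-s₁, -s₂)`, so we may
assume `|s₂| ≤ s₁ = a`. After dividing by `a - s₂ ≥ 0` the claim reads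
`r a^(r-1) (a - s₂) ≤ a^r - s₂^⟨r⟩`. For `s₂ ≥ 0` this says that the concave function `x ↦ x^r`
lies below its tangent at `a` (weighted AM-GM). For `s₂ = -c < 0` it splits into `r a^r ≤ a^r` and
`r a^(r-1) c ≤ c^(r-1) c`, the latter because `x ↦ x^(r-1)` is nonincreasing and `c ≤ a`.
-/

open Real

noncomputable def signedRpow (r s : ℝ) : ℝ := |s| ^ (r - 1) * s

lemma signedRpow_neg (r s : ℝ) : signedRpow r (-s) = -signedRpow r s := by
  simp only [signedRpow, abs_neg, mul_neg]

lemma signedRpow_of_nonneg {r s : ℝ} (hr : r ≠ 0) (hs : 0 ≤ s) : signedRpow r s = s ^ r := by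
  rw [signedRpow, abs_of_nonneg hs]
  rcases hs.eq_or_lt with rfl | hs
  · simp [zero_rpow hr]
  · rw [rpow_sub_one hs.ne', div_mul_cancel₀ _ hs.ne']

lemma mul_rpow_sub_one_mul_sub_le_rpow_sub_rpow {r a b : ℝ} (hr0 : 0 ≤ r) (hr1 : r ≤ 1)
    (ha : 0 < a) (hb : 0 ≤ b) : r * a ^ (r - 1) * (a - b) ≤ a ^ r - b ^ r := by
  have amgm : b ^ r * a ^ (1 - r) ≤ r * b + (1 - r) * a :=
    geom_mean_le_arith_mean2_weighted hr0 (by linarith) hb ha.le (by ring)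
  have hinv : a ^ (r - 1) * a ^ (1 - r) = 1 := by
    rw [← rpow_add ha, show r - 1 + (1 - r) = 0 by ring, rpow_zero]
  have hself : a ^ (r - 1) * a = a ^ r := by
    rw [rpow_sub_one ha.ne', div_mul_cancel₀ _ ha.ne']
  have hpos : 0 ≤ a ^ (r - 1) := (rpow_pos_of_pos ha _).le
  calc r * a ^ (r - 1) * (a - b) = a ^ r - a ^ (r - 1) * (r * b + (1 - r) * a) := by
        rw [← hself]; ring
    _ ≤ a ^ r - a ^ (r - 1) * (b ^ r * a ^ (1 - r)) := by gcongr
    _ = a ^ r - b ^ r := by rw [mul_left_comm, hinv, mul_one]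

lemma mul_rpow_sub_one_mul_add_le_rpow_add_rpow {r a c : ℝ} (hr1 : r ≤ 1)
    (hc : 0 < c) (hca : c ≤ a) : r * a ^ (r - 1) * (a + c) ≤ a ^ r + c ^ r := by
  have ha : 0 < a := hc.trans_le hca
  have hself : ∀ {x : ℝ}, 0 < x → x ^ (r - 1) * x = x ^ r := fun hx => by
    rw [rpow_sub_one hx.ne', div_mul_cancel₀ _ hx.ne']
  have hmono : a ^ (r - 1) ≤ c ^ (r - 1) := rpow_le_rpow_of_nonpos hc hca (by linarith)
  have hpos : 0 ≤ a ^ (r - 1) := (rpow_pos_of_pos ha _).le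
  calc r * a ^ (r - 1) * (a + c) = r * (a ^ (r - 1) * a) + r * (a ^ (r - 1) * c) := by ring
    _ ≤ 1 * (a ^ (r - 1) * a) + 1 * (c ^ (r - 1) * c) := by gcongr
    _ = a ^ r + c ^ r := by rw [hself ha, hself hc, one_mul, one_mul]

lemma mul_rpow_sub_one_mul_sub_le_rpow_sub_signedRpow {r a b : ℝ} (hr0 : 0 < r) (hr1 : r ≤ 1)
    (ha : 0 < a) (hb : -a ≤ b) : r * a ^ (r - 1) * (a - b) ≤ a ^ r - signedRpow r b := by
  rcases le_or_gt 0 b with hb0 | hb0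
  · rw [signedRpow_of_nonneg hr0.ne' hb0]
    exact mul_rpow_sub_one_mul_sub_le_rpow_sub_rpow hr0.le hr1 ha hb0
  · rw [← neg_neg b, signedRpow_neg, signedRpow_of_nonneg hr0.ne' (by linarith), sub_neg_eq_add,
      sub_neg_eq_add]
    exact mul_rpow_sub_one_mul_add_le_rpow_add_rpow hr1 (by linarith) (by linarith)

lemma mul_sq_mul_max_rpow_le_signedRpow_of_abs_le {r : ℝ} (hr0 : 0 < r) (hr1 : r ≤ 1)
    {s₁ s₂ : ℝ} (h : |s₂| ≤ |s₁|) :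
    r * |s₁ - s₂| ^ 2 * (max |s₁| |s₂|) ^ (r - 1)
      ≤ (s₁ - s₂) * (signedRpow r s₁ - signedRpow r s₂) := by
  wlog hs₁ : 0 < s₁ generalizing s₁ s₂
  · rcases (not_lt.mp hs₁).lt_or_eq with hneg | rfl
    · have := this (s₁ := -s₁) (s₂ := -s₂) (by rwa [abs_neg, abs_neg]) (by linarith)
      rw [abs_neg, abs_neg, signedRpow_neg, signedRpow_neg, ← neg_sub', abs_neg] at this
      linarith
    · obtain rfl : s₂ = 0 := by simpa using h
      simp
  rw [abs_of_pos hs₁] at h ⊢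
  rw [max_eq_left h, sq_abs, signedRpow_of_nonneg hr0.ne' hs₁.le]
  have hkey := mul_rpow_sub_one_mul_sub_le_rpow_sub_signedRpow hr0 hr1 hs₁ (neg_le_of_abs_le h)
  have hsub : 0 ≤ s₁ - s₂ := by linarith [le_abs_self s₂]
  calc r * (s₁ - s₂) ^ 2 * s₁ ^ (r - 1) = (s₁ - s₂) * (r * s₁ ^ (r - 1) * (s₁ - s₂)) := by ring
    _ ≤ (s₁ - s₂) * (s₁ ^ r - signedRpow r s₂) := by gcongr

theorem stmt_0 (r : ℝ) (hr : r ∈ Set.Ioo (0:ℝ) 1) (s₁ s₂ : ℝ) :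
    r * |s₁ - s₂| ^ 2 * (max |s₁| |s₂|) ^ (r - 1)
      ≤ (s₁ - s₂) * (|s₁| ^ (r - 1) * s₁ - |s₂| ^ (r - 1) * s₂) := by
  wlog h : |s₂| ≤ |s₁| generalizing s₁ s₂
  · have := this s₂ s₁ (le_of_not_ge h)
    rw [abs_sub_comm, max_comm] at this
    linarith
  exact mul_sq_mul_max_rpow_le_signedRpow_of_abs_le hr.1 hr.2.le h
end

section
/- Let σ ≥ 2, (λᵢ) positive reals, (qᵢ) positive reals, c > 0, ε ∈ (0,1), and suppose qᵢ ≥ c·λᵢ^{(σ+2ε-2)/(2σ)} for all i. Then for every square-summable sequence (xᵢ), (∑ᵢ xᵢ² qᵢ^{-2})^{σ/2} ≤ c^{-σ}·(∑ᵢ xᵢ²/λᵢ)^{(σ-2)/2}·(∑ᵢ xᵢ² λᵢ^{-ε}), whenever all sums converge. -/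
/-! With `θ = (σ - 2) / σ`, the lower bound on `qᵢ` gives
`xᵢ² / qᵢ² ≤ c⁻² xᵢ² λᵢ^(-(θ + ε (1 - θ))) = c⁻² (xᵢ² / λᵢ)^θ (xᵢ² λᵢ^(-ε))^(1 - θ)`.
Hölder's inequality with exponents `1 / θ` and `1 / (1 - θ)` bounds the sum of the right-hand
sides by `c⁻² A^θ B^(1 - θ)`, where `A = ∑ xᵢ² / λᵢ` and `B = ∑ xᵢ² λᵢ^(-ε)`; raising this to
the power `σ / 2` gives the claim. -/

open Real

namespace Real

theorem summable_and_tsum_rpow_mul_rpow_one_sub_le {ι : Type*} {a b : ι → ℝ} {θ : ℝ}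
    (hθ₀ : 0 ≤ θ) (hθ₁ : θ ≤ 1) (ha : ∀ i, 0 ≤ a i) (hb : ∀ i, 0 ≤ b i)
    (ha_sum : Summable a) (hb_sum : Summable b) :
    (Summable fun i => a i ^ θ * b i ^ (1 - θ)) ∧
      ∑' i, a i ^ θ * b i ^ (1 - θ) ≤ (∑' i, a i) ^ θ * (∑' i, b i) ^ (1 - θ) := by
  rcases hθ₀.eq_or_lt with rfl | hθ₀
  · simpa using hb_sum
  rcases hθ₁.eq_or_lt with rfl | hθ₁
  · simpa using ha_sum
  have hθ : θ ≠ 0 := hθ₀.ne'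
  have h1θ : 1 - θ ≠ 0 := (sub_pos.2 hθ₁).ne'
  have holder := summable_and_inner_le_Lp_mul_Lq_tsum_of_nonneg
    (HolderConjugate.inv_one_sub_inv hθ₀ hθ₁)
    (fun i => rpow_nonneg (ha i) θ) (fun i => rpow_nonneg (hb i) (1 - θ))
    (by simpa [← rpow_mul (ha _), hθ] using ha_sum)
    (by simpa [← rpow_mul (hb _), h1θ] using hb_sum)
  simpa [← rpow_mul (ha _), ← rpow_mul (hb _), hθ, h1θ] using holder

theorem div_rpow_mul_mul_rpow_neg_rpow_one_sub {t Λ : ℝ} (ht : 0 ≤ t) (hΛ : 0 < Λ)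
    (θ ε : ℝ) :
    (t / Λ) ^ θ * (t * Λ ^ (-ε)) ^ (1 - θ) = t * Λ ^ (-(θ + ε * (1 - θ))) := by
  rw [div_eq_mul_inv, mul_rpow ht (inv_nonneg.2 hΛ.le), mul_rpow ht (rpow_nonneg hΛ.le _),
    mul_mul_mul_comm, ← rpow_add' ht (by norm_num), add_sub_cancel, rpow_one,
    inv_rpow hΛ.le, ← rpow_neg hΛ.le, ← rpow_mul hΛ.le, ← rpow_add hΛ]
  ring_nf

theorem div_sq_le_of_mul_rpow_le {t q c Λ β : ℝ} (ht : 0 ≤ t) (hc : 0 < c) (hΛ : 0 < Λ)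
    (hq : c * Λ ^ (β / 2) ≤ q) :
    t / q ^ 2 ≤ c ^ (-2 : ℝ) * (t * Λ ^ (-β)) := by
  have hpos : 0 < c * Λ ^ (β / 2) := by positivity
  calc t / q ^ 2 ≤ t / (c * Λ ^ (β / 2)) ^ 2 :=
        div_le_div_of_nonneg_left ht (by positivity) (pow_le_pow_left₀ hpos.le hq 2)
    _ = c ^ (-2 : ℝ) * (t * Λ ^ (-β)) := by
        rw [mul_pow, ← rpow_natCast, ← rpow_natCast, ← rpow_mul hΛ.le, rpow_neg hc.le,
          rpow_neg hΛ.le]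
        norm_num
        field_simp

end Real

theorem stmt_3_general (σ c ε : ℝ) (hσ : 2 ≤ σ) (hc : 0 < c)
    (Λ q : ℕ → ℝ) (hΛ : ∀ i, 0 < Λ i)
    (hlow : ∀ i, q i ≥ c * Λ i ^ ((σ + 2 * ε - 2) / (2 * σ)))
    (x : ℕ → ℝ)
    (h2 : Summable fun i => x i ^ 2 / Λ i)
    (h3 : Summable fun i => x i ^ 2 * Λ i ^ (-ε)) :
    (∑' i, x i ^ 2 / q i ^ 2) ^ (σ / 2)
      ≤ c ^ (-σ) * (∑' i, x i ^ 2 / Λ i) ^ ((σ - 2) / 2)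
        * (∑' i, x i ^ 2 * Λ i ^ (-ε)) := by
  have hσ₀ : 0 < σ := by linarith
  set θ := (σ - 2) / σ with hθ
  have hA : 0 ≤ ∑' i, x i ^ 2 / Λ i := tsum_nonneg fun i => div_nonneg (sq_nonneg _) (hΛ i).le
  have hB : 0 ≤ ∑' i, x i ^ 2 * Λ i ^ (-ε) :=
    tsum_nonneg fun i => mul_nonneg (sq_nonneg _) (rpow_nonneg (hΛ i).le _)
  have hθ₀ : 0 ≤ θ := div_nonneg (by linarith) hσ₀.le
  have hθ₁ : θ ≤ 1 := div_le_one_of_le₀ (by linarith) hσ₀.le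
  obtain ⟨hsum, hholder⟩ := summable_and_tsum_rpow_mul_rpow_one_sub_le hθ₀ hθ₁
    (fun i => div_nonneg (sq_nonneg (x i)) (hΛ i).le)
    (fun i => mul_nonneg (sq_nonneg (x i)) (rpow_nonneg (hΛ i).le _)) h2 h3
  have hpt : ∀ i, x i ^ 2 / q i ^ 2
      ≤ c ^ (-2 : ℝ) * ((x i ^ 2 / Λ i) ^ θ * (x i ^ 2 * Λ i ^ (-ε)) ^ (1 - θ)) := by
    intro i
    rw [div_rpow_mul_mul_rpow_neg_rpow_one_sub (sq_nonneg _) (hΛ i)]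
    refine div_sq_le_of_mul_rpow_le (sq_nonneg _) hc (hΛ i) ((hlow i).trans_eq' ?_)
    rw [hθ]
    field_simp
    ring_nf
  have hdom := hsum.mul_left (c ^ (-2 : ℝ))
  have hS : ∑' i, x i ^ 2 / q i ^ 2 ≤ c ^ (-2 : ℝ) *
      ((∑' i, x i ^ 2 / Λ i) ^ θ * (∑' i, x i ^ 2 * Λ i ^ (-ε)) ^ (1 - θ)) := by
    calc _ ≤ ∑' i, c ^ (-2 : ℝ) * ((x i ^ 2 / Λ i) ^ θ * (x i ^ 2 * Λ i ^ (-ε)) ^ (1 - θ)) :=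
          (hdom.of_nonneg_of_le (fun i => by positivity) hpt).tsum_le_tsum hpt hdom
      _ ≤ _ := by rw [tsum_mul_left]; exact mul_le_mul_of_nonneg_left hholder (by positivity)
  refine (rpow_le_rpow (tsum_nonneg fun i => by positivity) hS (by positivity)).trans_eq ?_
  rw [mul_rpow (by positivity) (by positivity), mul_rpow (by positivity) (by positivity),
    ← rpow_mul hc.le, ← rpow_mul hA, ← rpow_mul hB, hθ, ← mul_assoc,
    show (-2 : ℝ) * (σ / 2) = -σ by ring, show (σ - 2) / σ * (σ / 2) = (σ - 2) / 2 by field_simp,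
    show (1 - (σ - 2) / σ) * (σ / 2) = 1 by field_simp; ring, rpow_one]

theorem stmt_3 (σ c ε : ℝ) (hσ : 2 ≤ σ) (hc : 0 < c) (hε : ε ∈ Set.Ioo (0:ℝ) 1)
    (Λ q : ℕ → ℝ) (hΛ : ∀ i, 0 < Λ i) (hq : ∀ i, 0 < q i)
    (hlow : ∀ i, q i ≥ c * Λ i ^ ((σ + 2 * ε - 2) / (2 * σ)))
    (x : ℕ → ℝ)
    (hx : Summable fun i => x i ^ 2)
    (h1 : Summable fun i => x i ^ 2 / q i ^ 2)
    (h2 : Summable fun i => x i ^ 2 / Λ i)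
    (h3 : Summable fun i => x i ^ 2 * Λ i ^ (-ε)) :
    (∑' i, x i ^ 2 / q i ^ 2) ^ (σ / 2)
      ≤ c ^ (-σ) * (∑' i, x i ^ 2 / Λ i) ^ ((σ - 2) / 2)
        * (∑' i, x i ^ 2 * Λ i ^ (-ε)) :=
  stmt_3_general σ c ε hσ hc Λ q hΛ hlow x h2 h3
end

section
/- Let σ ≥ 2, let Q : ℓ² → ℓ² be the diagonal operator Q eᵢ = qᵢ eᵢ with qᵢ > 0, let λᵢ > 0, and define ‖x‖_H² := ∑ xᵢ²/λᵢ, ‖x‖_Q := ‖Q^{-1}x‖_{ℓ²}. Suppose there are c, c₁ > 0 and ε ∈ (0,1) with qᵢ ≥ c λᵢ^{(σ+2ε-2)/(2σ)} and ‖x‖_{r+1}² ≥ c₁ ∑ xᵢ² λᵢ^{-ε} for all x. Then there exists ξ > 0 such that ‖x‖_{r+1}² · ‖x‖_H^{σ-2} ≥ ξ ‖x‖_Q^{σ} for all x. -/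
/-!
Weighted Hölder with weights `xᵢ² / λᵢ`, applied to `λᵢ / qᵢ²` at exponent `σ / 2`, gives
`‖x‖_Q^σ ≤ ‖x‖_H^(σ-2) · ∑ xᵢ² λᵢ^((σ-2)/2) / qᵢ^σ`. The lower bound on `qᵢ` bounds each term of
the last series by `c^(-σ) xᵢ² λᵢ^(-ε)`, and the Nash-type inequality bounds that series by
`‖x‖²_{r+1} / c₁`; so `ξ = c₁ c^σ` works.
-/

open Real

theorem Real.tsum_inner_le_weight_mul_Lp_of_nonneg {ι : Type*} {p : ℝ} (hp : 1 ≤ p) {w f : ι → ℝ}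
    (hw : ∀ i, 0 ≤ w i) (hf : ∀ i, 0 ≤ f i) (hw_sum : Summable w)
    (hwf_sum : Summable fun i => w i * f i ^ p) :
    ∑' i, w i * f i ≤ (∑' i, w i) ^ (1 - p⁻¹) * (∑' i, w i * f i ^ p) ^ p⁻¹ := by
  have hwf : ∀ i, 0 ≤ w i * f i ^ p := fun i => mul_nonneg (hw i) (rpow_nonneg (hf i) p)
  refine tsum_le_of_sum_le (fun i => mul_nonneg (hw i) (hf i)) fun s => ?_
  refine (inner_le_weight_mul_Lp_of_nonneg s hp w f hw hf).trans ?_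
  exact mul_le_mul
    (rpow_le_rpow (Finset.sum_nonneg fun i _ => hw i) (hw_sum.sum_le_tsum s fun i _ => hw i)
      (sub_nonneg.2 (inv_le_one_of_one_le₀ hp)))
    (rpow_le_rpow (Finset.sum_nonneg fun i _ => hwf i) (hwf_sum.sum_le_tsum s fun i _ => hwf i)
      (inv_nonneg.2 (zero_le_one.trans hp)))
    (rpow_nonneg (Finset.sum_nonneg fun i _ => hwf i) _) (rpow_nonneg (tsum_nonneg hw) _)

theorem Real.rpow_tsum_inner_le_weight_mul_Lp_of_nonneg {ι : Type*} {p : ℝ} (hp : 1 ≤ p)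
    {w f : ι → ℝ} (hw : ∀ i, 0 ≤ w i) (hf : ∀ i, 0 ≤ f i) (hw_sum : Summable w)
    (hwf_sum : Summable fun i => w i * f i ^ p) :
    (∑' i, w i * f i) ^ p ≤ (∑' i, w i) ^ (p - 1) * ∑' i, w i * f i ^ p := by
  have hp₀ : p ≠ 0 := (zero_lt_one.trans_le hp).ne'
  have hW : 0 ≤ ∑' i, w i := tsum_nonneg hw
  have hWF : 0 ≤ ∑' i, w i * f i ^ p :=
    tsum_nonneg fun i => mul_nonneg (hw i) (rpow_nonneg (hf i) p)
  calc (∑' i, w i * f i) ^ p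
      ≤ ((∑' i, w i) ^ (1 - p⁻¹) * (∑' i, w i * f i ^ p) ^ p⁻¹) ^ p := by
        gcongr
        · exact tsum_nonneg fun i => mul_nonneg (hw i) (hf i)
        · exact tsum_inner_le_weight_mul_Lp_of_nonneg hp hw hf hw_sum hwf_sum
    _ = (∑' i, w i) ^ (p - 1) * ∑' i, w i * f i ^ p := by
        rw [mul_rpow (rpow_nonneg hW _) (rpow_nonneg hWF _), ← rpow_mul hW,
          rpow_inv_rpow hWF hp₀, sub_mul, one_mul, inv_mul_cancel₀ hp₀]

theorem rpow_tsum_sq_div_sq_le {σ : ℝ} (hσ : 2 ≤ σ) {Λ q x : ℕ → ℝ} (hΛ : ∀ i, 0 < Λ i)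
    (hq : ∀ i, 0 < q i) (hΛ_sum : Summable fun i => x i ^ 2 / Λ i)
    (hb_sum : Summable fun i => x i ^ 2 * Λ i ^ ((σ - 2) / 2) / q i ^ σ) :
    (∑' i, x i ^ 2 / q i ^ 2) ^ (σ / 2)
      ≤ (∑' i, x i ^ 2 / Λ i) ^ ((σ - 2) / 2) * ∑' i, x i ^ 2 * Λ i ^ ((σ - 2) / 2) / q i ^ σ := by
  have hweight : ∀ i, x i ^ 2 / Λ i * (Λ i / q i ^ 2) ^ (σ / 2)
      = x i ^ 2 * Λ i ^ ((σ - 2) / 2) / q i ^ σ := by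
    intro i
    have hΛi := hΛ i
    rw [div_rpow hΛi.le (by positivity), ← rpow_natCast (q i), ← rpow_mul (hq i).le,
      show (σ - 2) / 2 = σ / 2 - 1 by ring, rpow_sub_one hΛi.ne']
    push_cast
    field_simp
  have hH := rpow_tsum_inner_le_weight_mul_Lp_of_nonneg (p := σ / 2) (by linarith)
    (w := fun i => x i ^ 2 / Λ i) (f := fun i => Λ i / q i ^ 2)
    (fun i => div_nonneg (sq_nonneg _) (hΛ i).le) (fun i => div_nonneg (hΛ i).le (sq_nonneg _))
    hΛ_sum (by simpa only [hweight] using hb_sum)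
  simp only [hweight, div_mul_div_cancel₀ (hΛ _).ne'] at hH
  convert hH using 3
  ring

theorem rpow_div_rpow_le_of_mul_rpow_le {σ c ε Λ q : ℝ} (hσ : 0 < σ) (hc : 0 < c) (hΛ : 0 < Λ)
    (hq : c * Λ ^ ((σ + 2 * ε - 2) / (2 * σ)) ≤ q) :
    Λ ^ ((σ - 2) / 2) / q ^ σ ≤ Λ ^ (-ε) / c ^ σ := by
  have hq_pow : c ^ σ * Λ ^ ((σ + 2 * ε - 2) / 2) ≤ q ^ σ := by
    calc c ^ σ * Λ ^ ((σ + 2 * ε - 2) / 2)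
        = (c * Λ ^ ((σ + 2 * ε - 2) / (2 * σ))) ^ σ := by
          rw [mul_rpow hc.le (by positivity), ← rpow_mul hΛ.le]
          field_simp
      _ ≤ q ^ σ := by gcongr
  calc Λ ^ ((σ - 2) / 2) / q ^ σ
      ≤ Λ ^ ((σ - 2) / 2) / (c ^ σ * Λ ^ ((σ + 2 * ε - 2) / 2)) := by gcongr
    _ = Λ ^ (-ε) / c ^ σ := by
        rw [div_mul_eq_div_div_swap, ← rpow_sub hΛ]
        ring_nf

theorem stmt_14_general (σ c c₁ ε : ℝ) (hσ : 2 ≤ σ) (hc : 0 < c) (hc₁ : 0 < c₁)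
    (Λ q : ℕ → ℝ) (hΛ : ∀ i, 0 < Λ i) (hq : ∀ i, 0 < q i)
    (hqlow : ∀ i, q i ≥ c * Λ i ^ ((σ + 2 * ε - 2) / (2 * σ)))
    (N : (ℕ → ℝ) → ℝ)
    (hNash : ∀ x : ℕ → ℝ, Summable (fun i => x i ^ 2 * Λ i ^ (-ε)) →
      N x ^ 2 ≥ c₁ * ∑' i, x i ^ 2 * Λ i ^ (-ε)) :
    ∃ ξ : ℝ, 0 < ξ ∧ ∀ x : ℕ → ℝ,
      Summable (fun i => x i ^ 2 / q i ^ 2) →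
      Summable (fun i => x i ^ 2 / Λ i) →
      Summable (fun i => x i ^ 2 * Λ i ^ (-ε)) →
      Summable (fun i => x i ^ 2 * Λ i ^ ((σ - 2) / 2) / q i ^ σ) →
      N x ^ 2 * (∑' i, x i ^ 2 / Λ i) ^ ((σ - 2) / 2)
        ≥ ξ * (∑' i, x i ^ 2 / q i ^ 2) ^ (σ / 2) := by
  refine ⟨c₁ * c ^ σ, by positivity, fun x _ hΛ_sum hε_sum hb_sum => ?_⟩
  have hb : ∑' i, x i ^ 2 * Λ i ^ ((σ - 2) / 2) / q i ^ σ
      ≤ (∑' i, x i ^ 2 * Λ i ^ (-ε)) / c ^ σ := by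
    rw [← tsum_div_const]
    refine hb_sum.tsum_le_tsum (fun i => ?_) (hε_sum.div_const _)
    rw [mul_div_assoc, mul_div_assoc]
    exact mul_le_mul_of_nonneg_left
      (rpow_div_rpow_le_of_mul_rpow_le (by linarith) hc (hΛ i) (hqlow i)) (sq_nonneg _)
  have hH_nonneg : 0 ≤ (∑' i, x i ^ 2 / Λ i) ^ ((σ - 2) / 2) :=
    rpow_nonneg (tsum_nonneg fun i => div_nonneg (sq_nonneg _) (hΛ i).le) _
  calc c₁ * c ^ σ * (∑' i, x i ^ 2 / q i ^ 2) ^ (σ / 2)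
      ≤ c₁ * c ^ σ * ((∑' i, x i ^ 2 / Λ i) ^ ((σ - 2) / 2)
          * ((∑' i, x i ^ 2 * Λ i ^ (-ε)) / c ^ σ)) := by
        gcongr
        exact (rpow_tsum_sq_div_sq_le hσ hΛ hq hΛ_sum hb_sum).trans (by gcongr)
    _ = (c₁ * ∑' i, x i ^ 2 * Λ i ^ (-ε)) * (∑' i, x i ^ 2 / Λ i) ^ ((σ - 2) / 2) := by
        field_simp
    _ ≤ N x ^ 2 * (∑' i, x i ^ 2 / Λ i) ^ ((σ - 2) / 2) := by
        gcongr
        exact hNash x hε_sum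

theorem stmt_14 (σ c c₁ ε : ℝ) (hσ : 2 ≤ σ) (hc : 0 < c) (hc₁ : 0 < c₁)
    (hε : ε ∈ Set.Ioo (0:ℝ) 1)
    (Λ q : ℕ → ℝ) (hΛ : ∀ i, 0 < Λ i) (hq : ∀ i, 0 < q i)
    (hqlow : ∀ i, q i ≥ c * Λ i ^ ((σ + 2 * ε - 2) / (2 * σ)))
    (N : (ℕ → ℝ) → ℝ) (hN0 : ∀ x, 0 ≤ N x)
    (hNash : ∀ x : ℕ → ℝ, Summable (fun i => x i ^ 2 * Λ i ^ (-ε)) →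
      N x ^ 2 ≥ c₁ * ∑' i, x i ^ 2 * Λ i ^ (-ε)) :
    ∃ ξ : ℝ, 0 < ξ ∧ ∀ x : ℕ → ℝ,
      Summable (fun i => x i ^ 2 / q i ^ 2) →
      Summable (fun i => x i ^ 2 / Λ i) →
      Summable (fun i => x i ^ 2 * Λ i ^ (-ε)) →
      Summable (fun i => x i ^ 2 * Λ i ^ ((σ - 2) / 2) / q i ^ σ) →
      N x ^ 2 * (∑' i, x i ^ 2 / Λ i) ^ ((σ - 2) / 2)
        ≥ ξ * (∑' i, x i ^ 2 / q i ^ 2) ^ (σ / 2) :=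
  stmt_14_general σ c c₁ ε hσ hc hc₁ Λ q hΛ hq hqlow N hNash
end
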